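/- arXiv:math/0212405 — 4 statements merged into one kernel-verified Lean document; each statement's English description precedes it below -/
import Mathlib

section
/- If κ is a singular cardinal and there exists γ₀ < κ such that 2^γ = 2^{γ₀} for every cardinal γ with γ₀ ≤ γ < κ, then 2^κ = 2^{γ₀}. -/
/-!
Write `κ` as a sum of `cf κ` cardinals below `κ`; enlarging each summand to at least `γ₀` keeps
it below `κ`, so `2 ^ κ` is at most a product of `cf κ` copies of `2 ^ γ₀`, i.e.
`2 ^ (γ₀ * cf κ)`. Since `γ₀ * cf κ ≤ max γ₀ (cf κ) < κ`, this is again `2 ^ γ₀`.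
-/

open Cardinal Ordinal Order Set

namespace Cardinal

universe u

/-- The summands are the sizes of the initial segments below a cofinal subset of a well-order of
type `κ.ord`. -/
theorem exists_cof_family_lt_le_sum {κ : Cardinal.{u}} (hκ : ℵ₀ ≤ κ) :
    ∃ (ι : Type u) (f : ι → Cardinal.{u}), #ι = κ.ord.cof ∧ (∀ i, f i < κ) ∧ κ ≤ sum f := by
  induction κ using Cardinal.inductionOn with | mk α
  obtain ⟨_, _, hα⟩ := exists_ord_eq_type_lt α
  have : NoMaxOrder α := by
    rw [← isSuccPrelimit_type_lt_iff, ← hα]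
    exact (isSuccLimit_ord hκ).isSuccPrelimit
  obtain ⟨s, hs, hs_card⟩ := exists_cof_eq α
  refine ⟨s, fun x ↦ #(Iio x.1), by rw [hs_card, hα, cof_type], fun x ↦ mk_Iio_lt x.1 hα, ?_⟩
  refine mk_iUnion_le_sum_mk.trans' ?_
  rw [← mk_univ, ← isCofinal_iff_iUnion_Iio_eq_univ.1 hs, iUnion_coe_set]

theorem power_le_power_mul_mk_of_le_sum {ι : Type u} {a b κ : Cardinal.{u}} {c : ι → Cardinal.{u}}
    (ha : a ≠ 0) (hκ : κ ≤ sum c) (hc : ∀ i, a ^ c i ≤ a ^ b) : a ^ κ ≤ a ^ (b * #ι) :=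
  calc a ^ κ ≤ a ^ sum c := power_le_power_left ha hκ
    _ = prod fun i ↦ a ^ c i := power_sum a c
    _ ≤ prod fun _ : ι ↦ a ^ b := prod_le_prod _ _ hc
    _ = a ^ (b * #ι) := by rw [prod_const', power_mul]

end Cardinal

theorem bukovsky_hechler (κ γ₀ : Cardinal)
    (hinf : Cardinal.aleph0 ≤ κ) (hsing : κ.ord.cof < κ)
    (hγ₀ : γ₀ < κ)
    (hconst : ∀ γ : Cardinal, γ₀ ≤ γ → γ < κ → (2 : Cardinal) ^ γ = (2 : Cardinal) ^ γ₀) :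
    (2 : Cardinal) ^ κ = (2 : Cardinal) ^ γ₀ := by
  obtain ⟨ι, f, hι, hf, hκ⟩ := exists_cof_family_lt_le_sum hinf
  have hι_inf : ℵ₀ ≤ #ι := hι ▸ aleph0_le_cof_iff.2 (one_lt_cof_iff.2 (isSuccLimit_ord hinf))
  have hsum : κ ≤ sum fun i ↦ max γ₀ (f i) := hκ.trans (sum_le_sum _ _ fun i ↦ le_max_right _ _)
  refine le_antisymm ?_ (power_le_power_left two_ne_zero hγ₀.le)
  calc (2 : Cardinal) ^ κ ≤ 2 ^ (γ₀ * #ι) := power_le_power_mul_mk_of_le_sum two_ne_zero hsum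
        fun i ↦ (hconst _ (le_max_left _ _) (max_lt hγ₀ (hf i))).le
    _ ≤ 2 ^ max γ₀ κ.ord.cof :=
        power_le_power_left two_ne_zero (hι ▸ mul_le_max_of_aleph0_le_right hι_inf)
    _ = 2 ^ γ₀ := hconst _ (le_max_left _ _) (max_lt hγ₀ hsing)
end

section
/- If κ is a singular cardinal, i.e. the continuum function is eventually constant below κ (there is γ₀ < κ with 2^γ = 2^{γ₀} for all γ₀ ≤ γ < κ), then 2^κ equals the supremum of 2^γ for γ < κ. -/
/-!
Write `κ` as the union of `cof κ` initial segments, each of size `< κ`. Then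
`2 ^ κ ≤ ∏ 2 ^ γᵢ ≤ c ^ cof κ`, where `c` bounds `2 ^ γ` for `γ < κ`. If the continuum function
is constant from `γ₀` on, take `δ = max γ₀ (cof κ) < κ` and `c = 2 ^ δ`: since `δ` is infinite and
at least `cof κ`, `(2 ^ δ) ^ cof κ = 2 ^ (δ * cof κ) = 2 ^ δ`.
-/

open Cardinal Ordinal

theorem Cardinal.two_power_le_power_cof {κ c : Cardinal} (hκ : ℵ₀ ≤ κ)
    (h : ∀ γ < κ, (2 : Cardinal) ^ γ ≤ c) : (2 : Cardinal) ^ κ ≤ c ^ κ.ord.cof := by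
  induction κ using Cardinal.inductionOn with | mk α
  obtain ⟨_, _, hα⟩ := exists_ord_eq_type_lt α
  have : NoMaxOrder α := by
    rw [← isSuccPrelimit_type_lt_iff, ← hα]
    exact (isSuccLimit_ord hκ).isSuccPrelimit
  obtain ⟨s, hs, hs'⟩ := exists_ord_cof_eq α
  have hcover : #α ≤ sum fun i : s ↦ #(Set.Iio (i : α)) := by
    refine mk_iUnion_le_sum_mk.trans' ?_
    rw [← mk_univ, ← isCofinal_iff_iUnion_Iio_eq_univ.1 hs, Set.iUnion_coe_set]
  calc (2 : Cardinal) ^ #α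
      ≤ 2 ^ sum fun i : s ↦ #(Set.Iio (i : α)) := power_le_power_left two_ne_zero hcover
    _ = prod fun i : s ↦ (2 : Cardinal) ^ #(Set.Iio (i : α)) := power_sum _ _
    _ ≤ prod fun _ : s ↦ c := prod_le_prod _ _ fun i ↦ h _ (mk_Iio_lt i.1 hα)
    _ = c ^ (#α).ord.cof := by
      rw [prod_const', hα, cof_type, ← card_ord (Order.cof _), ← hs', card_type]

theorem bukovsky_hechler_sup (κ : Cardinal)
    (hinf : Cardinal.aleph0 ≤ κ) (hsing : κ.ord.cof < κ)
    (hconst : ∃ γ₀ < κ, ∀ γ : Cardinal, γ₀ ≤ γ → γ < κ → (2 : Cardinal) ^ γ = (2 : Cardinal) ^ γ₀) :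
    (2 : Cardinal) ^ κ = ⨆ γ : Set.Iio κ, (2 : Cardinal) ^ (γ : Cardinal) := by
  obtain ⟨γ₀, hγ₀κ, hc⟩ := hconst
  set δ := max γ₀ κ.ord.cof
  have hδκ : δ < κ := max_lt hγ₀κ hsing
  have hcof : ℵ₀ ≤ κ.ord.cof := aleph0_le_cof_iff.2 (one_lt_cof_iff.2 (isSuccLimit_ord hinf))
  have hbound : ∀ γ < κ, (2 : Cardinal) ^ γ ≤ 2 ^ δ := fun γ hγ ↦ by
    rcases le_total γ δ with hγδ | hδγ
    · exact power_le_power_left two_ne_zero hγδ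
    · rw [hc γ ((le_max_left _ _).trans hδγ) hγ, hc δ (le_max_left _ _) hδκ]
  apply le_antisymm
  · calc (2 : Cardinal) ^ κ
        ≤ (2 ^ δ) ^ κ.ord.cof := two_power_le_power_cof hinf hbound
      _ = 2 ^ δ := by
        rw [← power_mul, mul_eq_left (hcof.trans (le_max_right _ _)) (le_max_right _ _)
          (aleph0_pos.trans_le hcof).ne']
      _ ≤ ⨆ γ : Set.Iio κ, (2 : Cardinal) ^ (γ : Cardinal) :=
        le_ciSup Cardinal.bddAbove_of_small (⟨δ, hδκ⟩ : Set.Iio κ)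
  · exact ciSup_le' fun γ ↦ power_le_power_left two_ne_zero γ.2.le
end

section
/- Silver's theorem: if κ is a singular cardinal of uncountable cofinality and the set {α < κ : 2^α = α⁺} is stationary in κ, then 2^κ = κ⁺. -/
/-- `C` is a closed unbounded subset of the ordinal `κ`. -/
def IsClubIn (κ : Ordinal) (C : Set Ordinal) : Prop :=
  C ⊆ Set.Iio κ ∧
  (∀ α < κ, ∃ β ∈ C, α < β) ∧
  (∀ s ⊆ C, s.Nonempty → sSup s < κ → sSup s ∈ C)

/-- `S` is stationary in the ordinal `κ`: it meets every club. -/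
def IsStationaryIn (κ : Ordinal) (S : Set Ordinal) : Prop :=
  S ⊆ Set.Iio κ ∧ ∀ C, IsClubIn κ C → (S ∩ C).Nonempty

/-
Let `θ = cf κ`, fix a cofinal `g : θ → κ` and let `e = succSup g`, which is monotone, continuous and
cofinal in `κ`; hence `e` maps clubs of `θ` to clubs of `κ`, and the stationary set of `α` with
`2 ^ |α| = |α|⁺` pulls back to a stationary `T ⊆ θ`. For `i ∈ T` the subsets of `e i` are coded
injectively by ordinals `< |e i|⁺`, so each `A ⊆ κ` gives a function `F_A(i) = code (A ∩ e i)` with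
`|F_A(i)| ≤ |e i|`, and distinct `A` have codes agreeing only on a bounded set. Say `A ≼ B` when
`F_A ≤ F_B` on a stationary set; this is total since `T` is stationary. For fixed `B`, injecting
`F_B(i) + 1` into `e i` turns `F_A` into a regressive function on a stationary set, so by Fodor's
lemma `A` is determined by a function `θ → e (j + 1)` for some `j < θ`: there are at most
`θ · |e (j + 1)| ^ θ ≤ κ` such `A`. A total relation whose initial segments have size `≤ κ` lives
on at most `κ⁺` points, so `2 ^ κ ≤ κ⁺`.
-/

open Ordinal Cardinal Set Order

universe u

theorem Ordinal.iSup_Iio_add_one_lt {x a : Ordinal.{u}} {f : Iio x → Ordinal.{u}}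
    (hx : x.card < a.cof) (hf : ∀ j, f j < a) : ⨆ j, f j + 1 < a := by
  refine lift_iSup_add_one_lt_of_lt_cof ?_ hf
  rw [Cardinal.mk_Iio_ordinal, Cardinal.lift_lift, ← lift_cof]
  exact Cardinal.lift_lt.2 hx

section Club

variable {θ : Cardinal.{u}} {L : Ordinal.{u}} {C D S A B : Set Ordinal.{u}}

theorem IsClubIn.mem_of_forall_exists_mem (hC : IsClubIn L C) {i : Ordinal} (hi : 0 < i)
    (hiL : i < L) (h : ∀ j < i, ∃ c ∈ C, j < c ∧ c < i) : i ∈ C := by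
  obtain ⟨c, hc, -, hci⟩ := h 0 hi
  have hne : (C ∩ Iio i).Nonempty := ⟨c, hc, hci⟩
  have hsup : sSup (C ∩ Iio i) = i := by
    refine le_antisymm (csSup_le hne fun c hc => hc.2.le) (le_of_forall_lt fun j hj => ?_)
    obtain ⟨c, hc, hjc, hci⟩ := h j hj
    exact hjc.trans_le (le_csSup (bddAbove_Iio.mono inter_subset_right) ⟨hc, hci⟩)
  rw [← hsup]
  exact hC.2.2 _ inter_subset_left hne (by rwa [hsup])

theorem isClubIn_Ioo (hL : IsSuccLimit L) {a : Ordinal} (ha : a < L) : IsClubIn L (Ioo a L) := by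
  refine ⟨fun x hx => hx.2, fun α hα => ?_, fun s hs hne hsup => ⟨?_, hsup⟩⟩
  · exact ⟨max α a + 1, ⟨(le_max_right α a).trans_lt (lt_add_one _),
      hL.succ_lt (max_lt hα ha)⟩, (le_max_left α a).trans_lt (lt_add_one _)⟩
  · obtain ⟨x, hx⟩ := hne
    exact (hs hx).1.trans_le (le_csSup (bddAbove_Iio.mono fun y hy => (hs hy).2) hx)

theorem isClubIn_closedUnder (hθ : θ.IsRegular) (hθℵ : ℵ₀ < θ) (β : Ordinal → Ordinal)
    (hβ : ∀ j < θ.ord, β j < θ.ord) :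
    IsClubIn θ.ord {i | i < θ.ord ∧ ∀ j < i, β j < i} := by
  set next : Ordinal → Ordinal := fun x => ⨆ j : Iio x, β j + 1
  have hnext : ∀ x < θ.ord, next x < θ.ord := fun x hx =>
    iSup_Iio_add_one_lt (by rwa [hθ.cof_ord, ← lt_ord]) fun j => hβ j (j.2.trans hx)
  refine ⟨fun i hi => hi.1, fun α hα => ?_, fun s hs hne hsup => ⟨hsup, fun j hj => ?_⟩⟩
  · refine ⟨nfp next (α + 1), ⟨nfp_lt_ord_of_isRegular hθ hθℵ.ne' hnext
      ((isSuccLimit_ord hθ.aleph0_le).succ_lt hα), fun j hj => ?_⟩,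
      (lt_add_one α).trans_le (le_nfp _ _)⟩
    obtain ⟨n, hn⟩ := lt_nfp_iff.1 hj
    calc β j < β j + 1 := lt_add_one _
      _ ≤ next (next^[n] (α + 1)) := Ordinal.le_iSup (fun k : Iio _ => β k + 1) ⟨j, hn⟩
      _ = next^[n + 1] (α + 1) := (Function.iterate_succ_apply' _ _ _).symm
      _ ≤ nfp next (α + 1) := iterate_le_nfp _ _ _
  · obtain ⟨y, hy, hjy⟩ := exists_lt_of_lt_csSup hne hj
    exact ((hs hy).2 j hjy).trans_le (le_csSup (bddAbove_Iio.mono fun z hz => (hs hz).1) hy)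

theorem IsClubIn.inter (hθ : θ.IsRegular) (hθℵ : ℵ₀ < θ) (hC : IsClubIn θ.ord C)
    (hD : IsClubIn θ.ord D) : IsClubIn θ.ord (C ∩ D) := by
  refine ⟨fun x hx => hC.1 hx.1, fun α hα => ?_, fun s hs hne hsup =>
    ⟨hC.2.2 s (fun x hx => (hs hx).1) hne hsup, hD.2.2 s (fun x hx => (hs hx).2) hne hsup⟩⟩
  choose! nextC hnextC hltC using hC.2.1
  choose! nextD hnextD hltD using hD.2.1
  obtain ⟨i, ⟨hiL, hi⟩, hαi⟩ := (isClubIn_closedUnder hθ hθℵ (fun j => max (nextC j) (nextD j))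
    fun j hj => max_lt (hC.1 (hnextC j hj)) (hD.1 (hnextD j hj))).2.1 α hα
  refine ⟨i, ⟨hC.mem_of_forall_exists_mem (pos_of_gt hαi) hiL fun j hj => ?_,
    hD.mem_of_forall_exists_mem (pos_of_gt hαi) hiL fun j hj => ?_⟩, hαi⟩
  · exact ⟨nextC j, hnextC j (hj.trans hiL), hltC j (hj.trans hiL),
      (le_max_left _ _).trans_lt (hi j hj)⟩
  · exact ⟨nextD j, hnextD j (hj.trans hiL), hltD j (hj.trans hiL),
      (le_max_right _ _).trans_lt (hi j hj)⟩

theorem IsStationaryIn.inter_isClubIn (hθ : θ.IsRegular) (hθℵ : ℵ₀ < θ)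
    (hS : IsStationaryIn θ.ord S) (hC : IsClubIn θ.ord C) :
    IsStationaryIn θ.ord (S ∩ C) := by
  refine ⟨fun _ hx => hS.1 hx.1, fun D hD => ?_⟩
  obtain ⟨x, hxS, hxC, hxD⟩ := hS.2 _ (hC.inter hθ hθℵ hD)
  exact ⟨x, ⟨hxS, hxC⟩, hxD⟩

theorem IsStationaryIn.exists_gt (hL : IsSuccLimit L) (hS : IsStationaryIn L S) {α : Ordinal}
    (hα : α < L) : ∃ i ∈ S, α < i := by
  obtain ⟨i, hiS, hi, -⟩ := hS.2 _ (isClubIn_Ioo hL hα)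
  exact ⟨i, hiS, hi⟩

theorem IsStationaryIn.inter_or_inter (hθ : θ.IsRegular) (hθℵ : ℵ₀ < θ)
    (hS : IsStationaryIn θ.ord S) (hAB : S ⊆ A ∪ B) :
    IsStationaryIn θ.ord (S ∩ A) ∨ IsStationaryIn θ.ord (S ∩ B) := by
  refine or_iff_not_imp_left.2 fun hA => ⟨fun _ hx => hS.1 hx.1, fun D hD => ?_⟩
  obtain ⟨C, hC, hCA⟩ : ∃ C, IsClubIn θ.ord C ∧ ¬(S ∩ A ∩ C).Nonempty := by
    by_contra! h
    exact hA ⟨fun _ hx => hS.1 hx.1, h⟩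
  obtain ⟨x, hxS, hxC, hxD⟩ := hS.2 _ (hC.inter hθ hθℵ hD)
  exact ⟨x, ⟨hxS, (hAB hxS).resolve_left fun hxA => hCA ⟨x, ⟨hxS, hxA⟩, hxC⟩⟩, hxD⟩

/-- A weak form of Fodor's lemma. -/
theorem IsStationaryIn.exists_frequently_le_of_regressive (hθ : θ.IsRegular) (hθℵ : ℵ₀ < θ)
    (hS : IsStationaryIn θ.ord S) {p : Ordinal → Ordinal → Prop} (hp : ∀ i ∈ S, ∃ j < i, p i j) :
    ∃ j₀ < θ.ord, ∀ α < θ.ord, ∃ i ∈ S, α < i ∧ ∃ j ≤ j₀, p i j := by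
  by_contra! h
  choose! β hβ hβp using h
  obtain ⟨i, hiS, hiL, hi⟩ := hS.2 _ (isClubIn_closedUnder hθ hθℵ β hβ)
  obtain ⟨j, hji, hpj⟩ := hp i hiS
  exact hβp j (hji.trans hiL) i hiS (hi j hji) j le_rfl hpj

end Club

section SuccSup

variable {g : Ordinal.{u} → Ordinal.{u}} {i j x L Ω : Ordinal.{u}}

/-- Continuous in `i` even when `g` is not, so that it maps clubs to clubs. -/
noncomputable def succSup (g : Ordinal.{u} → Ordinal.{u}) (i : Ordinal.{u}) : Ordinal.{u} :=
  ⨆ j : Iio i, g j + 1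

theorem succSup_mono (g : Ordinal.{u} → Ordinal.{u}) : Monotone (succSup g) := fun _ i' h =>
  Ordinal.iSup_le fun j => Ordinal.le_iSup (fun k : Iio i' => g k + 1) ⟨j, j.2.trans_le h⟩

theorem lt_succSup_of_lt (g : Ordinal.{u} → Ordinal.{u}) (h : j < i) : g j < succSup g i :=
  (lt_add_one _).trans_le (Ordinal.le_iSup (fun k : Iio i => g k + 1) ⟨j, h⟩)

theorem lt_succSup_iff : x < succSup g i ↔ ∃ j < i, x < g j + 1 := by
  simp [succSup, Ordinal.lt_iSup_iff]

theorem succSup_lt (hi : i.card < Ω.cof) (hg : ∀ j < i, g j < Ω) : succSup g i < Ω :=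
  iSup_Iio_add_one_lt hi fun j => hg j j.2

theorem lt_succSup_add_one (h : x < succSup g i) : ∃ j < i, x < succSup g (j + 1) := by
  obtain ⟨j, hj, hxj⟩ := lt_succSup_iff.1 h
  exact ⟨j, hj, hxj.trans_le (Order.succ_le_of_lt (lt_succSup_of_lt g (lt_add_one j)))⟩

theorem IsClubIn.image_succSup (hLΩ : ∀ i < L, i.card < Ω.cof) (hg : ∀ j < L, g j < Ω)
    (hcof : ∀ α < Ω, ∃ j < L, α ≤ g j) {D : Set Ordinal} (hD : IsClubIn L D) :
    IsClubIn Ω (succSup g '' D) := by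
  have hsub : succSup g '' D ⊆ Iio Ω := by
    rintro _ ⟨i, hi, rfl⟩
    exact succSup_lt (hLΩ i (hD.1 hi)) fun j hj => hg j (hj.trans (hD.1 hi))
  refine ⟨hsub, fun α hα => ?_, fun s hs hne hsup => ?_⟩
  · obtain ⟨j, hj, hαj⟩ := hcof α hα
    obtain ⟨i, hiD, hji⟩ := hD.2.1 j hj
    exact ⟨_, mem_image_of_mem _ hiD, hαj.trans_lt (lt_succSup_of_lt g hji)⟩
  set u := D ∩ succSup g ⁻¹' s
  have hus : succSup g '' u = s := by rw [image_inter_preimage, inter_eq_right.2 hs]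
  have hune : u.Nonempty := (hus ▸ hne).of_image
  have hubdd : BddAbove u := bddAbove_Iio.mono (inter_subset_left.trans hD.1)
  have hsbdd : BddAbove s := bddAbove_Iio.mono (hs.trans hsub)
  have huL : sSup u < L := by
    by_contra! hLu
    obtain ⟨j, hj, hj'⟩ := hcof (sSup s) hsup
    obtain ⟨i, hiu, hji⟩ := exists_lt_of_lt_csSup hune (hj.trans_le hLu)
    exact (hj'.trans_lt (lt_succSup_of_lt g hji)).not_ge
      (le_csSup hsbdd (hus ▸ mem_image_of_mem _ hiu))
  have hsup_eq : succSup g (sSup u) = sSup s := by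
    refine le_antisymm (Ordinal.iSup_le fun j => ?_) (csSup_le hne ?_)
    · obtain ⟨i, hiu, hji⟩ := exists_lt_of_lt_csSup hune j.2
      exact Order.succ_le_of_lt ((lt_succSup_of_lt g hji).trans_le
        (le_csSup hsbdd (hus ▸ mem_image_of_mem _ hiu)))
    · rw [← hus]
      rintro _ ⟨i, hiu, rfl⟩
      exact succSup_mono g (le_csSup hubdd hiu)
  exact ⟨sSup u, hD.2.2 u inter_subset_left hune huL, hsup_eq⟩

theorem IsStationaryIn.preimage_succSup (hLΩ : ∀ i < L, i.card < Ω.cof) (hg : ∀ j < L, g j < Ω)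
    (hcof : ∀ α < Ω, ∃ j < L, α ≤ g j) {S : Set Ordinal} (hS : IsStationaryIn Ω S) :
    IsStationaryIn L {i | i < L ∧ succSup g i ∈ S} := by
  refine ⟨fun i hi => hi.1, fun D hD => ?_⟩
  obtain ⟨_, hxS, ⟨i, hiD, rfl⟩⟩ := hS.2 _ (hD.image_succSup hLΩ hg hcof)
  exact ⟨i, ⟨hD.1 hiD, hxS⟩, hiD⟩

end SuccSup

theorem Cardinal.mk_le_succ_of_total {P : Type u} (r : P → P → Prop) (htot : ∀ a b, r a b ∨ r b a)
    {c : Cardinal.{u}} (hc : ℵ₀ ≤ c) (hsec : ∀ b, #{a // r a b} ≤ c) : #P ≤ succ c := by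
  by_contra! hlt
  obtain ⟨Q, -, hQ⟩ := le_mk_iff_exists_subset.1 (hlt.le.trans_eq mk_univ.symm)
  have hU : #(⋃ q : Q, {a | r a q}) < #P :=
    calc _ ≤ #Q * ⨆ q : Q, #{a | r a q} := mk_iUnion_le _
      _ ≤ succ c * c := mul_le_mul' hQ.le (ciSup_le' fun q => hsec q)
      _ = succ c := mul_eq_left (hc.trans (le_succ c)) (le_succ c) (aleph0_pos.trans_le hc).ne'
      _ < #P := hlt
  obtain ⟨p, hp⟩ : ∃ p, p ∉ ⋃ q : Q, {a | r a q} := by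
    by_contra! h
    exact hU.ne (by rw [eq_univ_of_forall h, mk_univ])
  have hQp : Q ⊆ {a | r a p} := fun q hq =>
    (htot p q).resolve_left fun h => hp (mem_iUnion.2 ⟨⟨q, hq⟩, h⟩)
  exact (lt_succ c).not_ge (hQ.symm.le.trans ((mk_le_mk_of_subset hQp).trans (hsec p)))

theorem Ordinal.exists_injOn_Iic {b o : Ordinal.{u}} (hb : b.card ≤ o.card) (ho : ℵ₀ ≤ o.card) :
    ∃ d : Ordinal → Ordinal, MapsTo d (Iic b) (Iio o) ∧ InjOn d (Iic b) := by
  classical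
  obtain ⟨emb⟩ : Nonempty (Iic b ↪ Iio o) := by
    rw [← Cardinal.le_def, ← Iio_succ, succ_eq_add_one, Cardinal.mk_Iio_ordinal,
      Cardinal.mk_Iio_ordinal, Cardinal.lift_le, card_add_one, ← add_one_of_aleph0_le ho]
    gcongr
  refine ⟨fun x => if h : x ≤ b then emb ⟨x, h⟩ else 0, fun x hx => ?_, fun x hx y hy hxy => ?_⟩
  · simp only [dif_pos (show x ≤ b from hx)]
    exact (emb _).2
  · simp only [dif_pos (show x ≤ b from hx), dif_pos (show y ≤ b from hy)] at hxy
    exact congrArg Subtype.val (emb.injective (Subtype.ext hxy))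

noncomputable def Ordinal.setIioEquiv (o : Ordinal.{u}) :
    Set (Iio o) ≃ Iio (2 ^ o.card : Cardinal).ord :=
  Classical.choice <| Cardinal.eq.1 <| by
    rw [mk_set, Cardinal.mk_Iio_ordinal, Cardinal.mk_Iio_ordinal, card_ord, Cardinal.lift_power,
      Cardinal.lift_two]

noncomputable def Ordinal.traceCode (o : Ordinal.{u}) (A : Set Ordinal.{u}) : Ordinal.{u} :=
  setIioEquiv o {x | x.1 ∈ A}

theorem Ordinal.traceCode_lt (o : Ordinal.{u}) (A : Set Ordinal.{u}) :
    traceCode o A < (2 ^ o.card : Cardinal).ord :=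
  (setIioEquiv o _).2

theorem Ordinal.mem_iff_mem_of_traceCode_eq {o x : Ordinal.{u}} {A B : Set Ordinal.{u}}
    (h : traceCode o A = traceCode o B) (hx : x < o) : x ∈ A ↔ x ∈ B :=
  Set.ext_iff.1 ((setIioEquiv o).injective (Subtype.ext h)) ⟨x, hx⟩

section Counting

variable {L : Ordinal.{u}} {T : Set Ordinal.{u}} {ι : Type (u + 1)}
  {F : ι → Ordinal.{u} → Ordinal.{u}}

theorem mk_setOf_frequently_lt_le (hTL : T ⊆ Iio L)
    (hinj : ∀ a b, (∀ α < L, ∃ i ∈ T, α < i ∧ F a i = F b i) → a = b)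
    {c : Ordinal → Ordinal} {d : Ordinal → Ordinal → Ordinal}
    (hd : ∀ i ∈ T, InjOn (d i) (Iic (c i))) (o : Ordinal) :
    #{a | ∀ α < L, ∃ i ∈ T, F a i ≤ c i ∧ α < i ∧ d i (F a i) < o} ≤
      Cardinal.lift.{u + 1} ((o.card + 1) ^ L.card) := by
  classical
  let φ : {a | ∀ α < L, ∃ i ∈ T, F a i ≤ c i ∧ α < i ∧ d i (F a i) < o} → Iio L → Option (Iio o) :=
    fun a i => if h : i.1 ∈ T ∧ F a i ≤ c i ∧ d i (F a i) < o then some ⟨_, h.2.2⟩ else none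
  have hφ : Function.Injective φ := by
    intro a a' h
    refine Subtype.ext (hinj _ _ fun α hα => ?_)
    obtain ⟨i, hiT, hle, hαi, hlt⟩ := a.2 α hα
    have hi : φ a ⟨i, hTL hiT⟩ = φ a' ⟨i, hTL hiT⟩ := congrFun h _
    rw [show φ a ⟨i, hTL hiT⟩ = some ⟨_, hlt⟩ from dif_pos ⟨hiT, hle, hlt⟩] at hi
    by_cases h' : i ∈ T ∧ F a' i ≤ c i ∧ d i (F a' i) < o
    · rw [show φ a' ⟨i, hTL hiT⟩ = some ⟨_, h'.2.2⟩ from dif_pos h'] at hi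
      exact ⟨i, hiT, hαi, hd i hiT hle h'.2.1 (congrArg Subtype.val (Option.some_injective _ hi))⟩
    · rw [show φ a' ⟨i, hTL hiT⟩ = none from dif_neg h'] at hi
      exact absurd hi (Option.some_ne_none _)
  calc _ ≤ #(Iio L → Option (Iio o)) := mk_le_of_injective hφ
    _ = _ := by
      rw [← power_def, mk_option, Cardinal.mk_Iio_ordinal, Cardinal.mk_Iio_ordinal,
        Cardinal.lift_power, Cardinal.lift_add, Cardinal.lift_one]

theorem mk_setOf_isStationaryIn_le {θ κ : Cardinal.{u}} (hθ : θ.IsRegular) (hθℵ : ℵ₀ < θ)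
    (hθκ : θ ≤ κ) (hT : IsStationaryIn θ.ord T) {e : Ordinal.{u} → Ordinal.{u}}
    (he_mono : Monotone e) (he_cont : ∀ i x, x < e i → ∃ j < i, x < e (j + 1))
    (he_inf : ∀ i ∈ T, ℵ₀ ≤ (e i).card) (he_pow : ∀ j < θ.ord, ((e j).card + 1) ^ θ ≤ κ)
    (hF : ∀ a, ∀ i ∈ T, (F a i).card ≤ (e i).card)
    (hinj : ∀ a b, (∀ α < θ.ord, ∃ i ∈ T, α < i ∧ F a i = F b i) → a = b) (b : ι) :
    #{a | IsStationaryIn θ.ord {i ∈ T | F a i ≤ F b i}} ≤ Cardinal.lift.{u + 1} κ := by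
  choose! d hd_maps hd_inj using fun i (hi : i ∈ T) => exists_injOn_Iic (hF b i hi) (he_inf i hi)
  -- Fodor's lemma presses `i ↦ d i (F a i) < e i` down below a single `e (j + 1)`.
  have hfiber : ∀ a ∈ {a | IsStationaryIn θ.ord {i ∈ T | F a i ≤ F b i}}, ∃ j < θ.ord,
      ∀ α < θ.ord, ∃ i ∈ T, F a i ≤ F b i ∧ α < i ∧ d i (F a i) < e (j + 1) := by
    intro a ha
    obtain ⟨j₀, hj₀, h⟩ := ha.exists_frequently_le_of_regressive hθ hθℵ
      (p := fun i j => d i (F a i) < e (j + 1)) fun i hi => he_cont i _ (hd_maps i hi.1 hi.2)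
    refine ⟨j₀, hj₀, fun α hα => ?_⟩
    obtain ⟨i, ⟨hiT, hle⟩, hαi, j, hj, hlt⟩ := h α hα
    exact ⟨i, hiT, hle, hαi, hlt.trans_le (he_mono (by gcongr))⟩
  choose! J hJ hJ_spec using hfiber
  calc _ ≤ #(⋃ j : Iio θ.ord, {a | ∀ α < θ.ord, ∃ i ∈ T, F a i ≤ F b i ∧ α < i ∧
          d i (F a i) < e (j + 1)}) :=
        mk_le_mk_of_subset fun a ha => mem_iUnion.2 ⟨⟨J a, hJ a ha⟩, hJ_spec a ha⟩
    _ ≤ #(Iio θ.ord) * ⨆ j : Iio θ.ord, #{a | ∀ α < θ.ord, ∃ i ∈ T, F a i ≤ F b i ∧ α < i ∧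
          d i (F a i) < e (j + 1)} := mk_iUnion_le _
    _ ≤ Cardinal.lift.{u + 1} θ * Cardinal.lift.{u + 1} κ := by
        refine mul_le_mul' (by rw [Cardinal.mk_Iio_ordinal, card_ord]) (ciSup_le' fun j => ?_)
        refine (mk_setOf_frequently_lt_le hT.1 hinj hd_inj _).trans ?_
        rw [card_ord, Cardinal.lift_le]
        exact he_pow _ ((isSuccLimit_ord hθ.aleph0_le).add_one_lt j.2)
    _ = Cardinal.lift.{u + 1} κ := by
        rw [← Cardinal.lift_mul, mul_eq_right (hθℵ.le.trans hθκ) hθκ (aleph0_pos.trans hθℵ).ne']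

theorem mk_le_succ_of_isStationaryIn {θ κ : Cardinal.{u}} (hθ : θ.IsRegular) (hθℵ : ℵ₀ < θ)
    (hθκ : θ ≤ κ) (hT : IsStationaryIn θ.ord T) {e : Ordinal.{u} → Ordinal.{u}}
    (he_mono : Monotone e) (he_cont : ∀ i x, x < e i → ∃ j < i, x < e (j + 1))
    (he_inf : ∀ i ∈ T, ℵ₀ ≤ (e i).card) (he_pow : ∀ j < θ.ord, ((e j).card + 1) ^ θ ≤ κ)
    (hF : ∀ a, ∀ i ∈ T, (F a i).card ≤ (e i).card)
    (hinj : ∀ a b, (∀ α < θ.ord, ∃ i ∈ T, α < i ∧ F a i = F b i) → a = b) :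
    #ι ≤ succ (Cardinal.lift.{u + 1} κ) :=
  mk_le_succ_of_total (fun a b => IsStationaryIn θ.ord {i ∈ T | F a i ≤ F b i})
    (fun a b => hT.inter_or_inter hθ hθℵ fun i _ => le_total (F a i) (F b i))
    (Cardinal.aleph0_le_lift.2 (hθℵ.le.trans hθκ))
    (mk_setOf_isStationaryIn_le hθ hθℵ hθκ hT he_mono he_cont he_inf he_pow hF hinj)

end Counting

theorem Ordinal.exists_cofinal_fun (Ω : Ordinal.{u}) :
    ∃ g : Ordinal → Ordinal, (∀ j < Ω.cof.ord, g j < Ω) ∧ ∀ α < Ω, ∃ j < Ω.cof.ord, α ≤ g j := by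
  classical
  obtain ⟨f, hf⟩ := exists_isFundamentalSeq (o := Ω) rfl
  refine ⟨fun j => if h : j < Ω.cof.ord then f ⟨j, h⟩ else 0, fun j hj => ?_, fun α hα => ?_⟩
  · simp only [dif_pos hj]
    exact (f ⟨j, hj⟩).2
  · obtain ⟨_, ⟨j, rfl⟩, hj⟩ := hf.isCofinal_range ⟨α, hα⟩
    refine ⟨j, j.2, ?_⟩
    dsimp only
    rw [dif_pos (show (j : Ordinal) < Ω.cof.ord from j.2)]
    exact hj

theorem mk_powerset_Iio_le_succ {θ κ : Cardinal.{u}} (hθ : θ.IsRegular) (hθℵ : ℵ₀ < θ)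
    (hθκ : θ ≤ κ) {Ω : Ordinal.{u}} {T : Set Ordinal.{u}} (hT : IsStationaryIn θ.ord T)
    {e : Ordinal.{u} → Ordinal.{u}} (he_mono : Monotone e)
    (he_cont : ∀ i x, x < e i → ∃ j < i, x < e (j + 1)) (he_cof : ∀ x < Ω, ∃ j < θ.ord, x < e j)
    (he_gch : ∀ i ∈ T, 2 ^ (e i).card = succ (e i).card) (he_card : ∀ i ∈ T, θ ≤ (e i).card)
    (he_succ : ∀ i ∈ T, succ (e i).card ≤ κ) :
    #(𝒫 (Iio Ω)) ≤ succ (Cardinal.lift.{u + 1} κ) := by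
  refine mk_le_succ_of_isStationaryIn (F := fun (A : 𝒫 (Iio Ω)) i => traceCode (e i) A)
    hθ hθℵ hθκ hT he_mono he_cont (fun i hi => hθℵ.le.trans (he_card i hi)) (fun j hj => ?_)
    (fun A i hi => ?_) (fun A B h => ?_)
  · obtain ⟨m, hm, hjm⟩ := hT.exists_gt (isSuccLimit_ord hθ.aleph0_le) hj
    have hμ : ℵ₀ ≤ (e m).card := hθℵ.le.trans (he_card m hm)
    calc ((e j).card + 1) ^ θ ≤ (e m).card ^ θ := by
          rw [← add_one_of_aleph0_le hμ]
          exact power_le_power_right (by gcongr; exact he_mono hjm.le)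
      _ ≤ (e m).card ^ (e m).card :=
          power_le_power_left (aleph0_pos.trans_le hμ).ne' (he_card m hm)
      _ = succ (e m).card := by rw [power_self_eq hμ, he_gch m hm]
      _ ≤ κ := he_succ m hm
  · have h := traceCode_lt (e i) A
    rwa [he_gch i hi, lt_ord, lt_succ_iff] at h
  · have key : ∀ x < Ω, x ∈ A.1 ↔ x ∈ B.1 := by
      intro x hx
      obtain ⟨j, hj, hxj⟩ := he_cof x hx
      obtain ⟨i, -, hji, hAB⟩ := h j hj
      exact mem_iff_mem_of_traceCode_eq hAB (hxj.trans_le (he_mono hji.le))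
    exact Subtype.ext (Set.ext fun x =>
      ⟨fun hx => (key x (A.2 hx)).1 hx, fun hx => (key x (B.2 hx)).2 hx⟩)

theorem silver (κ : Cardinal) (hinf : Cardinal.aleph0 ≤ κ)
    (hsing : κ.ord.cof < κ) (hunc : Cardinal.aleph0 < κ.ord.cof)
    (hstat : IsStationaryIn κ.ord
      {α : Ordinal | 2 ^ α.card = Order.succ α.card}) :
    2 ^ κ = Order.succ κ := by
  set θ := κ.ord.cof
  have hθ : θ.IsRegular := isRegular_cof (isSuccLimit_ord hinf)
  have hθL : IsSuccLimit θ.ord := isSuccLimit_ord hθ.aleph0_le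
  obtain ⟨g, hg, hcof⟩ := exists_cofinal_fun κ.ord
  obtain ⟨j₁, hj₁, hθj₁⟩ := hcof θ.ord (ord_lt_ord.2 hsing)
  have hT : IsStationaryIn θ.ord
      ({i | i < θ.ord ∧ succSup g i ∈ {α : Ordinal | 2 ^ α.card = succ α.card}} ∩ Ioo j₁ θ.ord) :=
    (hstat.preimage_succSup (fun i hi => lt_ord.1 hi) hg hcof).inter_isClubIn hθ hunc
      (isClubIn_Ioo hθL hj₁)
  have h := mk_powerset_Iio_le_succ hθ hunc hsing.le hT (succSup_mono g)
    (fun _ _ => lt_succSup_add_one)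
    (fun x hx => by
      obtain ⟨j, hj, hxj⟩ := hcof x hx
      exact ⟨j + 1, hθL.add_one_lt hj, hxj.trans_lt (lt_succSup_of_lt g (lt_add_one j))⟩)
    (fun i hi => hi.1.2)
    (fun i hi => by simpa using card_le_card (hθj₁.trans_lt (lt_succSup_of_lt g hi.2.1)).le)
    (fun i hi => ((IsSingular.isSuccLimit ⟨hinf, hsing.ne⟩).succ_lt <| lt_ord.1 <|
      succSup_lt (lt_ord.1 hi.1.1) fun j hj => hg j (hj.trans hi.1.1)).le)
  rw [mk_powerset, Cardinal.mk_Iio_ordinal, card_ord, ← Cardinal.lift_succ] at h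
  exact le_antisymm (Cardinal.lift_le.1 (by rwa [Cardinal.lift_power, Cardinal.lift_two]))
    (succ_le_of_lt (cantor κ))
end

section
/- If κ is a singular strong limit cardinal of uncountable cofinality and 2^κ > κ⁺, then the set {α < κ : 2^α > α⁺} contains a closed unbounded subset of κ. -/
/-!
Fix a normal sequence `c` of length `cof κ` cofinal in `κ`, and let `S` be the set of `i` with
`2 ^ |c i| ≤ |c i|⁺`. If `S` is not stationary, `c` maps a club disjoint from `S` onto a club in
`κ` on which `2 ^ α > α⁺`. If `S` is stationary, Silver's argument gives `2 ^ κ ≤ κ⁺`: coding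
`A ⊆ κ` by `i ↦` (the code of `A ∩ c i` below `|c i|⁺`) yields `2 ^ κ` functions on `S`, any two
eventually different. Call `F` below `G` if `F < G` on a stationary set. Any two functions are
comparable, and by Fodor's lemma each has at most `κ` functions below it, so there are at most
`κ⁺` functions.
-/

open Cardinal Order Set Ordinal

universe u

section Stationary

variable {α : Type u} [LinearOrder α]

theorem exists_isLUB_of_bddAbove [WellFoundedLT α] {s : Set α} (hs : BddAbove s) : ∃ a, IsLUB s a :=
  ⟨wellFounded_lt.min (upperBounds s) hs, wellFounded_lt.min_mem _ hs,
    fun _ hb => wellFounded_lt.min_le hb⟩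

theorem bddAbove_range_of_aleph0_lt_cof (hα : ℵ₀ < cof α) (t : ℕ → α) : BddAbove (range t) :=
  .of_not_isCofinal fun h => (cof_le h).not_gt ((countable_range t).le_aleph0.trans_lt hα)

theorem noMaxOrder_of_one_lt_cof (hα : 1 < cof α) : NoMaxOrder α := by
  have : Nonempty α := cof_ne_zero_iff.1 (zero_lt_one.trans hα).ne'
  exact (noTopOrder_iff_noMaxOrder α).1 (Order.one_lt_cof_iff.1 hα)

theorem isClub_Ioi [NoMaxOrder α] (a : α) : IsClub (Ioi a) :=
  ⟨(isUpperSet_Ioi a).dirSupClosed, fun b =>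
    let ⟨c, hc⟩ := exists_gt (max a b)
    ⟨c, (le_max_left a b).trans_lt hc, (le_max_right a b).trans hc.le⟩⟩

theorem IsStationary.exists_gt [NoMaxOrder α] {S : Set α} (hS : IsStationary S) (a : α) :
    ∃ i ∈ S, a < i :=
  hS (isClub_Ioi a)

def diagInter (C : α → Set α) : Set α :=
  {i | ∀ j < i, i ∈ C j}

theorem dirSupClosed_diagInter {C : α → Set α} (hC : ∀ j, DirSupClosed (C j)) :
    DirSupClosed (diagInter C) := by
  intro d hd hd₀ _ a ha j hj
  obtain ⟨x, hxd, hjx, -⟩ := ha.exists_between hj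
  exact hC j (show d ∩ Ici x ⊆ C j from fun y hy => hd hy.1 j (hjx.trans_le hy.2))
    ⟨x, hxd, le_rfl⟩ (.of_linearOrder _) (ha.inter_Ici_of_mem hxd)

variable [WellFoundedLT α]

theorem IsStationary.inter_isClub (hα : cof α ≠ ℵ₀) {S C : Set α} (hS : IsStationary S)
    (hC : IsClub C) : IsStationary (S ∩ C) := fun _ hD => by
  simpa only [inter_assoc] using hS (hC.inter hα hD)

theorem isCofinal_diagInter [IsRegularCardinalOrder α] (hα : ℵ₀ < cof α) {C : α → Set α}
    (hC : ∀ j, IsClub (C j)) : IsCofinal (diagInter C) := by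
  have hD : ∀ x : α, IsClub (⋂ j : Iio x, C j) := fun x =>
    IsClub.iInter hα.ne' (by simpa using mk_Iio_lt x ord_cardinalMk) fun j => hC j
  choose next hnext hle using fun x => (hD x).isCofinal x
  intro a
  -- `next x` lies in every `C j` with `j < x`, so the supremum `b` of the iterates of `next` on
  -- `a` lies in every `C j` with `j < b`
  set t : ℕ → α := fun n => next^[n] a
  have ht : Monotone t := monotone_nat_of_le_succ fun n => by
    simp only [t, Function.iterate_succ_apply']
    exact hle _
  obtain ⟨b, hb⟩ := exists_isLUB_of_bddAbove (bddAbove_range_of_aleph0_lt_cof hα t)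
  refine ⟨b, fun j hj => ?_, hb.1 ⟨0, rfl⟩⟩
  obtain ⟨_, ⟨n, rfl⟩, hjn, -⟩ := hb.exists_between hj
  refine (hC j).isLUB_mem (t := range fun m => t (n + m + 1)) ?_ (range_nonempty _) ⟨?_, ?_⟩
  · rintro _ ⟨m, rfl⟩
    change next^[n + m + 1] a ∈ C j
    rw [Function.iterate_succ_apply']
    exact mem_iInter.1 (hnext _) ⟨j, hjn.trans_le (ht (Nat.le_add_right n m))⟩
  · rintro _ ⟨m, rfl⟩
    exact hb.1 ⟨_, rfl⟩
  · intro c hc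
    refine hb.2 ?_
    rintro _ ⟨m, rfl⟩
    exact (ht (by omega : m ≤ n + m + 1)).trans (hc ⟨m, rfl⟩)

theorem IsClub.diagInter [IsRegularCardinalOrder α] (hα : ℵ₀ < cof α) {C : α → Set α}
    (hC : ∀ j, IsClub (C j)) : IsClub (diagInter C) :=
  ⟨dirSupClosed_diagInter fun j => (hC j).dirSupClosed, isCofinal_diagInter hα hC⟩

theorem isClub_setOf_isSuccLimit [IsRegularCardinalOrder α] (hα : ℵ₀ < cof α) :
    IsClub {i : α | IsSuccLimit i} := by
  have := noMaxOrder_of_one_lt_cof (one_lt_aleph0.trans hα)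
  have : Nonempty α := cof_ne_zero_iff.1 (aleph0_pos.trans hα).ne'
  refine ⟨fun d hd hd₀ _ a ha => ?_, ?_⟩
  · by_cases had : a ∈ d
    exacts [hd had, ha.isSuccLimit_of_notMem hd₀ had]
  · choose next hnext using fun j : α => exists_gt j
    obtain ⟨x₀⟩ := ‹Nonempty α›
    refine ((IsClub.diagInter hα fun j => isClub_Ioi (next j)).inter hα.ne'
      (isClub_Ioi x₀)).isCofinal.mono fun i hi => ⟨not_isMin_of_lt hi.2, fun j hji => ?_⟩
    exact hji.2 (hnext j) (hi.1 j hji.1)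

/-- Fodor's pressing-down lemma. -/
theorem IsStationary.exists_isStationary_of_forall_exists_lt [IsRegularCardinalOrder α]
    (hα : ℵ₀ < cof α) {S : Set α} (hS : IsStationary S) {P : α → α → Prop}
    (hP : ∀ i ∈ S, ∃ j < i, P i j) : ∃ j, IsStationary {i ∈ S | P i j} := by
  by_contra! h
  choose C hC hdisj using fun j => not_isStationary_iff.1 (h j)
  obtain ⟨i, hiS, hiC⟩ := hS (IsClub.diagInter hα hC)
  obtain ⟨j, hji, hP⟩ := hP i hiS
  exact (hdisj j).notMem_of_mem_left ⟨hiS, hP⟩ (hiC j hji)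

theorem IsStationary.exists_isStationary_setOf_lt_of_isNormal [IsRegularCardinalOrder α]
    (hα : ℵ₀ < cof α) {β : Type*} [LinearOrder β] {c v : α → β} (hc : IsNormal c)
    {S : Set α} (hS : IsStationary S) (hv : ∀ i ∈ S, v i < c i) :
    ∃ γ, IsStationary {i ∈ S | v i < c γ} := by
  have hS' := hS.inter_isClub hα.ne' (isClub_setOf_isSuccLimit hα)
  obtain ⟨γ, hγ⟩ := hS'.exists_isStationary_of_forall_exists_lt hα fun i hi =>
    (hc.lt_iff_exists_lt hi.2).1 (hv i hi.1)
  exact ⟨γ, hγ.mono fun i hi => ⟨hi.1.1, hi.2⟩⟩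

end Stationary

theorem Cardinal.IsStrongLimit.power_lt {κ a b : Cardinal} (hκ : IsStrongLimit κ) (ha : a < κ)
    (hb : b < κ) : a ^ b < κ :=
  calc a ^ b ≤ (2 ^ a) ^ b := power_le_power_right (cantor a).le
    _ = 2 ^ (a * b) := power_mul.symm
    _ < κ := hκ.isStrongPrelimit (mul_lt_of_lt hκ.aleph0_le ha hb)

theorem Cardinal.mk_le_succ_of_total_s15 {P : Type u} {κ : Cardinal.{u}} (hκ : ℵ₀ ≤ κ)
    (R : P → P → Prop) (hR : ∀ p, #{q | R q p} ≤ κ)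
    (htot : Pairwise fun p q => R p q ∨ R q p) : #P ≤ succ κ := by
  by_contra! hP
  obtain ⟨X, hX⟩ := le_mk_iff_exists_set.1 hP.le
  have hsucc : ℵ₀ ≤ succ κ := hκ.trans (le_succ κ)
  set Y := X ∪ ⋃ x : X, {q | R q x}
  have hY : #Y ≤ succ κ :=
    calc #Y ≤ #X + #X * ⨆ x : X, #{q | R q x} :=
          (mk_union_le _ _).trans (add_le_add le_rfl (mk_iUnion_le _))
      _ ≤ succ κ + succ κ * succ κ := by
        rw [hX]; gcongr; exact ciSup_le' fun x => (hR x).trans (le_succ κ)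
      _ = succ κ := by rw [mul_eq_self hsucc, add_eq_self hsucc]
  obtain ⟨w, hw⟩ := (ne_univ_iff_exists_notMem Y).1 fun h =>
    (hY.trans_lt hP).ne (by rw [h, mk_univ])
  have hXw : X ⊆ {q | R q w} := fun x hx =>
    (htot fun h : w = x => hw (.inl (h ▸ hx))).resolve_left fun h =>
      hw (.inr (mem_iUnion.2 ⟨⟨x, hx⟩, h⟩))
  exact (lt_succ κ).not_ge (hX ▸ (mk_le_mk_of_subset hXw).trans (hR w))

theorem Ordinal.exists_injOn_Iio_of_card_le {o o' : Ordinal.{u}} (h : o.card ≤ o'.card) :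
    ∃ e : Ordinal.{u} → Ordinal.{u}, InjOn e (Iio o) ∧ MapsTo e (Iio o) (Iio o') := by
  obtain ⟨f⟩ : Nonempty (o.ToType ↪ o'.ToType) := by rwa [← le_def, mk_toType, mk_toType]
  refine ⟨fun x => if hx : x < o then (ToType.mk.symm (f (ToType.mk ⟨x, hx⟩))).1 else 0,
    fun x hx y hy hxy => ?_, fun x hx => ?_⟩
  · simp only [dif_pos (show x < o from hx), dif_pos (show y < o from hy)] at hxy
    exact congrArg Subtype.val (ToType.mk.injective (f.injective (ToType.mk.symm.injective
      (Subtype.ext hxy))))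
  · simp only [dif_pos (show x < o from hx)]
    exact (ToType.mk.symm _).2

theorem Cardinal.exists_injective_card_lt (X : Type u) :
    ∃ e : X → Ordinal.{u}, Function.Injective e ∧ ∀ x, (e x).card < #X := by
  obtain ⟨r, _, h⟩ := exists_ord_eq X
  exact ⟨typein r, (typein r).injective, fun x => card_typein_lt x h⟩

section Counting

variable {α : Type u} [LinearOrder α]

theorem mk_le_power_of_eventually_ne {P : Type u} {U : P → Set α} {G : P → α → Ordinal.{u}}
    {o : Ordinal.{u}} (hU : ∀ q a, ∃ i ∈ U q, a < i) (hG : ∀ q, ∀ i ∈ U q, G q i < o)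
    (hne : Pairwise fun q q' => ∃ a, ∀ i ∈ U q ∩ U q', a < i → G q i ≠ G q' i) :
    #P ≤ (o.card + 1) ^ #α := by
  classical
  let code (q : P) (i : α) : Option o.ToType :=
    if h : i ∈ U q then some (ToType.mk ⟨G q i, hG q i h⟩) else none
  have hcode : Function.Injective code := by
    intro q q' hqq'
    by_contra h
    obtain ⟨a, ha⟩ := hne h
    obtain ⟨i, hi, hai⟩ := hU q a
    have := congrFun hqq' i
    by_cases hi' : i ∈ U q'
    · simp only [code, dif_pos hi, dif_pos hi', Option.some.injEq,
        EmbeddingLike.apply_eq_iff_eq] at this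
      exact ha i ⟨hi, hi'⟩ hai (congrArg Subtype.val this)
    · simp [code, hi, hi'] at this
  simpa using mk_le_of_injective hcode

theorem IsStationary.isStationary_setOf_lt_or_gt [WellFoundedLT α] [NoMaxOrder α]
    (hα : cof α ≠ ℵ₀) {β : Type*} [LinearOrder β] {S : Set α} (hS : IsStationary S)
    {f g : α → β} (hfg : ∃ a, ∀ i ∈ S, a < i → f i ≠ g i) :
    IsStationary {i ∈ S | f i < g i} ∨ IsStationary {i ∈ S | g i < f i} := by
  obtain ⟨a, ha⟩ := hfg
  rw [← isStationary_union_iff hα]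
  exact (hS.inter_isClub hα (isClub_Ioi a)).mono fun i ⟨hiS, hai⟩ =>
    (lt_or_gt_of_ne (ha i hiS hai)).imp (⟨hiS, ·⟩) (⟨hiS, ·⟩)

variable [WellFoundedLT α] [IsRegularCardinalOrder α] {κ : Cardinal.{u}} {c : α → Ordinal.{u}}
  {S : Set α} {P : Type u} {F : P → α → Ordinal.{u}}

theorem mk_setOf_isStationary_lt_le (hα : ℵ₀ < cof α) (hκ : IsStrongLimit κ) (hακ : #α < κ)
    (hc : IsNormal c) (hcκ : ∀ i, (c i).card < κ) (hF : ∀ p, ∀ i ∈ S, (F p i).card ≤ (c i).card)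
    (hFne : Pairwise fun p q => ∃ a, ∀ i ∈ S, a < i → F p i ≠ F q i) (p : P) :
    #{q | IsStationary {i ∈ S | F q i < F p i}} ≤ κ := by
  have := noMaxOrder_of_one_lt_cof (one_lt_aleph0.trans hα)
  choose! e he using fun i (hi : i ∈ S) => exists_injOn_Iio_of_card_le (hF p i hi)
  -- `e i` codes the values below `F p i` by ordinals below `c i`; pressing down bounds the codes
  -- of each `q` by a single `c γ` on a stationary set
  let U (q : P) (γ : α) : Set α := {i ∈ {i ∈ S | F q i < F p i} | e i (F q i) < c γ}
  have hcover : {q | IsStationary {i ∈ S | F q i < F p i}} ⊆ ⋃ γ, {q | IsStationary (U q γ)} :=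
    fun q hq => mem_iUnion.2 <|
      hq.exists_isStationary_setOf_lt_of_isNormal hα hc fun i hi => (he i hi.1).2 hi.2
  have hU : ∀ γ, #{q | IsStationary (U q γ)} ≤ κ := by
    intro γ
    refine (mk_le_power_of_eventually_ne (P := {q | IsStationary (U q γ)}) (U := fun q => U q γ)
      (G := fun q i => e i (F q i)) (fun q a => q.2.exists_gt a) (fun q i hi => hi.2)
      fun q q' hqq' => ?_).trans (hκ.power_lt ?_ hακ).le
    · obtain ⟨a, ha⟩ := hFne (Subtype.coe_ne_coe.2 hqq')
      exact ⟨a, fun i ⟨hi, hi'⟩ hai => (he i hi.1.1).1.ne hi.1.2 hi'.1.2 (ha i hi.1.1 hai)⟩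
    · exact add_lt_of_lt hκ.aleph0_le (hcκ γ) (one_lt_aleph0.trans_le hκ.aleph0_le)
  calc #{q | IsStationary {i ∈ S | F q i < F p i}}
      ≤ #(⋃ γ, {q | IsStationary (U q γ)}) := mk_le_mk_of_subset hcover
    _ ≤ #α * ⨆ γ, #{q | IsStationary (U q γ)} := mk_iUnion_le _
    _ ≤ κ * κ := mul_le_mul' hακ.le (ciSup_le' hU)
    _ = κ := mul_eq_self hκ.aleph0_le

theorem mk_le_succ_of_eventually_ne (hα : ℵ₀ < cof α) (hκ : IsStrongLimit κ) (hακ : #α < κ)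
    (hc : IsNormal c) (hcκ : ∀ i, (c i).card < κ) (hS : IsStationary S)
    (hF : ∀ p, ∀ i ∈ S, (F p i).card ≤ (c i).card)
    (hFne : Pairwise fun p q => ∃ a, ∀ i ∈ S, a < i → F p i ≠ F q i) : #P ≤ succ κ :=
  have := noMaxOrder_of_one_lt_cof (one_lt_aleph0.trans hα)
  mk_le_succ_of_total_s15 hκ.aleph0_le (fun q p => IsStationary {i ∈ S | F q i < F p i})
    (mk_setOf_isStationary_lt_le hα hκ hακ hc hcκ hF hFne)
    fun _ _ hpq => hS.isStationary_setOf_lt_or_gt hα.ne' (hFne hpq)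

end Counting

theorem StrictMono.exists_isNormal_interleave {α : Type u} [LinearOrder α] {g : α → Ordinal.{u}}
    (hg : StrictMono g) :
    ∃ c : α → Ordinal.{u}, IsNormal c ∧ (∀ i, c i ≤ g i) ∧ ∀ i j, i < j → g i < c j := by
  have hle (i : α) : ⨆ j : Iio i, succ (g j) ≤ g i :=
    Ordinal.iSup_le fun j => succ_le_of_lt (hg j.2)
  have hlt (i j : α) (h : i < j) : g i < ⨆ k : Iio j, succ (g k) :=
    (lt_succ (g i)).trans_le (Ordinal.le_iSup (fun k : Iio j => succ (g k)) ⟨i, h⟩)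
  refine ⟨fun i => ⨆ j : Iio i, succ (g j),
    isNormal_iff.2 ⟨fun i j h => (hle i).trans_lt (hlt i j h),
      fun i hi a ha => Ordinal.iSup_le fun j => ?_⟩, hle, hlt⟩
  obtain ⟨k, hki, hjk⟩ := hi.lt_iff_exists_lt.1 j.2
  exact succ_le_of_lt ((hlt j k hjk).trans_le (ha k hki))

theorem Ordinal.exists_isNormal_cofinal {o : Ordinal.{u}} (ho : IsSuccLimit o) :
    ∃ c : o.cof.ord.ToType → Ordinal.{u}, IsNormal c ∧ (∀ i, c i < o) ∧ ∀ x < o, ∃ i, x < c i := by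
  obtain ⟨f, hf⟩ := exists_isFundamentalSeq (o := o) rfl
  have := Cardinal.noMaxOrder (isRegular_cof ho).aleph0_le
  have hg : StrictMono fun i => (f (ToType.mk.symm i)).1 :=
    (Subtype.strictMono_coe _).comp (hf.strictMono.comp ToType.mk.symm.strictMono)
  obtain ⟨c, hc, hcg, hgc⟩ := hg.exists_isNormal_interleave
  refine ⟨c, hc, fun i => (hcg i).trans_lt (f _).2, fun x hx => ?_⟩
  obtain ⟨_, ⟨j, rfl⟩, hxj⟩ := hf.isCofinal_range ⟨x, hx⟩
  obtain ⟨i, hi⟩ := exists_gt (ToType.mk j)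
  exact ⟨i, (show x ≤ f j from hxj).trans_lt (by simpa using hgc _ _ hi)⟩

theorem Cardinal.IsRegular.isRegularCardinalOrder_toType {c : Cardinal} (hc : c.IsRegular) :
    IsRegularCardinalOrder c.ord.ToType :=
  ⟨by rw [type_toType, cof_toType, hc.cof_ord]⟩

theorem isClubIn_image_of_isNormal {α : Type u} [LinearOrder α] [WellFoundedLT α]
    {c : α → Ordinal.{u}} {o : Ordinal.{u}} (hc : IsNormal c) (hco : ∀ i, c i < o)
    (hcof : ∀ x < o, ∃ i, x < c i) {D : Set α} (hD : IsClub D) : IsClubIn o (c '' D) := by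
  refine ⟨?_, fun x hx => ?_, fun s hs hs₀ hlt => ?_⟩
  · rintro _ ⟨i, -, rfl⟩
    exact hco i
  · obtain ⟨i, hi⟩ := hcof x hx
    obtain ⟨j, hjD, hij⟩ := hD.isCofinal i
    exact ⟨c j, mem_image_of_mem c hjD, hi.trans_le (hc.monotone hij)⟩
  · have hsD : c ⁻¹' s ⊆ D := fun i hi => by
      obtain ⟨j, hj, hji⟩ := hs hi
      exact hc.strictMono.injective hji ▸ hj
    have hs' : (c ⁻¹' s).Nonempty := by
      obtain ⟨x, hx⟩ := hs₀
      obtain ⟨i, -, rfl⟩ := hs hx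
      exact ⟨i, hx⟩
    have hsbdd : BddAbove s := ⟨o, fun x hx => by obtain ⟨i, -, rfl⟩ := hs hx; exact (hco i).le⟩
    obtain ⟨i, hi⟩ := hcof _ hlt
    obtain ⟨δ, hδ⟩ := exists_isLUB_of_bddAbove (s := c ⁻¹' s)
      ⟨i, fun j hj => (hc.strictMono.lt_iff_lt.1 ((le_csSup hsbdd hj).trans_lt hi)).le⟩
    have hlub := hc.map_isLUB hδ hs'
    rw [image_preimage_eq_of_subset (hs.trans (image_subset_range _ _))] at hlub
    rw [hlub.csSup_eq hs₀]
    exact mem_image_of_mem c (hD.isLUB_mem hsD hs' hδ)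

/-- Silver's theorem. -/
theorem two_power_le_succ_of_isStationary {α : Type u} [LinearOrder α] [WellFoundedLT α]
    [IsRegularCardinalOrder α] (hα : ℵ₀ < cof α) {κ : Cardinal.{u}} (hκ : IsStrongLimit κ)
    (hακ : #α < κ) {c : α → Ordinal.{u}} (hc : IsNormal c) (hco : ∀ i, c i < κ.ord)
    (hcof : ∀ x < κ.ord, ∃ i, x < c i)
    (hS : IsStationary {i | 2 ^ (c i).card ≤ succ (c i).card}) : 2 ^ κ ≤ succ κ := by
  let b (i : α) : κ.ord.ToType := ToType.mk ⟨c i, hco i⟩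
  have hb (i : α) : #(Iio (b i)) = (c i).card := by
    change #{y // y < b i} = _
    rw [← card_typein]
    simpa [b] using congrArg card (ToType.mk_symm_apply_coe (b i)).symm
  choose e he_inj he_card using fun i => exists_injective_card_lt (Set (Iio (b i)))
  have := mk_le_succ_of_eventually_ne (P := Set κ.ord.ToType)
    (F := fun A i => e i (Subtype.val ⁻¹' A)) hα hκ hακ hc (fun i => lt_ord.1 (hco i)) hS
    (fun A i hi => ?_) (fun A B hAB => ?_)
  · rwa [mk_set, mk_toType, card_ord] at this
  · have := he_card i (Subtype.val ⁻¹' A)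
    rw [mk_set, hb] at this
    exact lt_succ_iff.1 (this.trans_le hi)
  · obtain ⟨x, hx⟩ : ∃ x, ¬(x ∈ A ↔ x ∈ B) := by
      by_contra! h
      exact hAB (Set.ext h)
    obtain ⟨a, ha⟩ := hcof _ (ToType.mk.symm x).2.out
    refine ⟨a, fun i _ hai heq => hx ?_⟩
    have hxi : x < b i := by
      rw [← OrderIso.symm_apply_lt]
      exact ha.trans (hc.strictMono hai)
    simpa using congrArg (⟨x, hxi⟩ ∈ ·) (he_inj i heq)

theorem silver_contrapositive (κ : Cardinal)
    (hsl : κ.IsStrongLimit) (hsing : κ.ord.cof < κ)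
    (hunc : Cardinal.aleph0 < κ.ord.cof)
    (hpow : Order.succ κ < 2 ^ κ) :
    ∃ C, IsClubIn κ.ord C ∧
      C ⊆ {α : Ordinal | Order.succ α.card < 2 ^ α.card} := by
  have hκ : IsSuccLimit κ.ord := isSuccLimit_ord (hunc.le.trans (cof_ord_le κ))
  have hreg := isRegular_cof hκ
  have := hreg.isRegularCardinalOrder_toType
  obtain ⟨c, hc, hco, hcof⟩ := exists_isNormal_cofinal hκ
  by_cases hS : IsStationary {i | 2 ^ (c i).card ≤ succ (c i).card}
  · refine absurd (two_power_le_succ_of_isStationary ?_ hsl ?_ hc hco hcof hS) hpow.not_ge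
    · rwa [cof_toType, hreg.cof_ord]
    · rwa [mk_toType, card_ord]
  · obtain ⟨D, hD, hDS⟩ := not_isStationary_iff.1 hS
    refine ⟨c '' D, isClubIn_image_of_isNormal hc hco hcof hD, ?_⟩
    rintro _ ⟨i, hi, rfl⟩
    show succ (c i).card < 2 ^ (c i).card
    exact not_le.1 (hDS.notMem_of_mem_right hi)
end
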